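/- Let (X,T) be a TDS. If there exist two distinct T-invariant ergodic Borel probability measures on X, each with full support, then (X,T) is FK-sensitive. -/

import Mathlib

open Filter Topology MeasureTheory Set

namespace FKPaper

variable {X : Type*} [MetricSpace X]

/-- The maximal fit of an `(n,δ)`-match between the orbits of `x` and `z` under `T`:
the largest cardinality of the domain of an order-preserving bijection
`π : D → R`, with `D, R ⊆ {0,…,n-1}` and `dist (T^[i] x) (T^[π i] z) < δ` for `i ∈ D`. -/
noncomputable def maxFit (T : X → X) (δ : ℝ) (n : ℕ) (x z : X) : ℕ :=
  sSup {k : ℕ | ∃ i j : Fin k → ℕ, StrictMono i ∧ StrictMono j ∧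
    (∀ s, i s < n) ∧ (∀ s, j s < n) ∧ ∀ s, dist (T^[i s] x) (T^[j s] z) < δ}

/-- `f̄_{n,δ}(x,z) = 1 - (maximal fit of an (n,δ)-match of x and z)/n`. -/
noncomputable def fbarN (T : X → X) (δ : ℝ) (n : ℕ) (x z : X) : ℝ :=
  1 - (maxFit T δ n x z : ℝ) / n

/-- `f̄_δ(x,z) = limsup_{n→∞} f̄_{n,δ}(x,z)`. -/
noncomputable def fbar (T : X → X) (δ : ℝ) (x z : X) : ℝ :=
  Filter.limsup (fun n => fbarN T δ n x z) Filter.atTop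

/-- The Feldman–Katok pseudometric `ρ_FK(x,z) = inf {δ > 0 : f̄_δ(x,z) < δ}`. -/
noncomputable def rhoFK (T : X → X) (x z : X) : ℝ :=
  sInf {δ : ℝ | 0 < δ ∧ fbar T δ x z < δ}

/-- FK-sensitivity: some `ε > 0` works for every nonempty open set. -/
def FKSensitive (T : X → X) : Prop :=
  ∃ ε > 0, ∀ U : Set X, IsOpen U → U.Nonempty →
    ∃ x ∈ U, ∃ y ∈ U, ε < rhoFK T x y

end FKPaper

open FKPaper Filter Topology MeasureTheory Set

/-! If `μ ≠ ν`, some bounded continuous `F` has `∫ F dμ < ∫ F dν`; put `c = ∫ F dν - ∫ F dμ`.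
For `(y, x)` in `X × X` the quantity `limsup_n (A_n F y - A_n F x)`, with `A_n` the Birkhoff
averages, is invariant under `T` in each coordinate, so it is `ν ⊗ μ`-a.e. constant by ergodicity
of both factors, and the reverse Fatou lemma shows that this constant is at least `c`. Both measures
having full support, every nonempty open `U` contains such a pair, whose averages differ by more
than `c / 2` infinitely often. A good `(n, δ)`-match between two orbits, on the other hand, forces
their averages to be close by uniform continuity of `F`, so `ρ_FK(x, y)` is bounded below
independently of `U`. -/

open Function
open scoped BoundedContinuousFunction

lemma limsup_add_eq_of_tendsto_zero {u d : ℕ → ℝ} (hu : IsBoundedUnder (· ≤ ·) atTop u)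
    (hu' : IsBoundedUnder (· ≥ ·) atTop u) (hd : Tendsto d atTop (𝓝 0)) :
    limsup (u + d) atTop = limsup u atTop := by
  have key : ∀ v e : ℕ → ℝ, IsBoundedUnder (· ≤ ·) atTop v → IsBoundedUnder (· ≥ ·) atTop v →
      Tendsto e atTop (𝓝 0) → limsup (v + e) atTop ≤ limsup v atTop := fun v e hv hv' he => by
    simpa [he.limsup_eq] using limsup_add_le hv' hv he.isBoundedUnder_ge.isCoboundedUnder_le
      he.isBoundedUnder_le
  refine le_antisymm (key u d hu hu' hd) ?_
  simpa using key (u + d) (-d) (isBoundedUnder_le_add hu hd.isBoundedUnder_le)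
    (isBoundedUnder_ge_add hu' hd.isBoundedUnder_ge) (by rw [← neg_zero]; exact hd.neg)

lemma Ergodic.ae_eq_const_of_separately_invariant {α β : Type*} [MeasurableSpace α]
    [MeasurableSpace β] {f : α → α} {g : β → β} {μ : Measure α} {ν : Measure β} [SFinite μ]
    [IsProbabilityMeasure ν] (hf : Ergodic f μ) (hg : Ergodic g ν) {H : α × β → ℝ}
    (hH : Measurable H) (hHf : ∀ a b, H (f a, b) = H (a, b)) (hHg : ∀ a b, H (a, g b) = H (a, b)) :
    ∃ c, H =ᵐ[μ.prod ν] const _ c := by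
  set s : α → ℝ := fun a => ∫ b, H (a, b) ∂ν
  have hsection : ∀ a, ∀ᵐ b ∂ν, H (a, b) = s a := fun a => by
    obtain ⟨c, hc⟩ := hg.ae_eq_const_of_ae_eq_comp₀ (hH.comp measurable_prodMk_left).nullMeasurable
      (.of_forall fun b => hHg a b)
    have hsc : s a = c := (integral_congr_ae hc).trans (by simp)
    exact hc.mono fun b hb => hb.trans hsc.symm
  have hs : Measurable s := hH.stronglyMeasurable.integral_prod_right'.measurable
  obtain ⟨c, hc⟩ := hf.ae_eq_const_of_ae_eq_comp₀ hs.nullMeasurable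
    (.of_forall fun a => by simp [s, hHf])
  refine ⟨c, (Measure.ae_prod_iff_ae_ae (measurableSet_eq_fun hH measurable_const)).2 ?_⟩
  filter_upwards [hc] with a ha
  filter_upwards [hsection a] with b hb
  simpa [hb] using ha

section ReverseFatou

variable {α : Type*} [MeasurableSpace α] {μ : Measure α} [IsFiniteMeasure μ] {f : ℕ → α → ℝ}
  {C : ℝ}

lemma limsup_integral_le_integral_limsup_of_nonneg (hf : ∀ n, Measurable (f n))
    (hf0 : ∀ n a, 0 ≤ f n a) (hfC : ∀ n a, f n a ≤ C) :
    limsup (fun n => ∫ a, f n a ∂μ) atTop ≤ ∫ a, limsup (fun n => f n a) atTop ∂μ := by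
  have hint : ∀ n, Integrable (f n) μ := fun n =>
    .of_bound (hf n).aestronglyMeasurable C (.of_forall fun a => by
      simpa [abs_of_nonneg (hf0 n a)] using hfC n a)
  have hbdd : ∀ a, IsBoundedUnder (· ≤ ·) atTop (fun n => f n a) := fun a =>
    isBoundedUnder_of_eventually_le (.of_forall fun n => hfC n a)
  have hcobdd : ∀ a, IsCoboundedUnder (· ≤ ·) atTop (fun n => f n a) := fun a =>
    isCoboundedUnder_le_of_le atTop fun n => hf0 n a
  have hlim0 : ∀ a, 0 ≤ limsup (fun n => f n a) atTop := fun a =>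
    le_limsup_of_le (hbdd a) fun b hb => (hb.exists).elim fun n hn => (hf0 n a).trans hn
  have hlimC : ∀ a, limsup (fun n => f n a) atTop ≤ C := fun a =>
    limsup_le_of_le (hcobdd a) (.of_forall fun n => hfC n a)
  have hlim_int : Integrable (fun a => limsup (fun n => f n a) atTop) μ :=
    .of_bound (Measurable.limsup hf).aestronglyMeasurable C (.of_forall fun a => by
      simpa [abs_of_nonneg (hlim0 a)] using hlimC a)
  rw [← ENNReal.ofReal_le_ofReal_iff (integral_nonneg hlim0)]
  calc ENNReal.ofReal (limsup (fun n => ∫ a, f n a ∂μ) atTop)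
      = limsup (fun n => ENNReal.ofReal (∫ a, f n a ∂μ)) atTop :=
        ENNReal.ofReal_limsup
          (isCoboundedUnder_le_of_le atTop fun n => integral_nonneg (hf0 n))
          (isBoundedUnder_of_eventually_le (a := C * μ.real univ) (.of_forall fun n => by
            simpa [mul_comm] using integral_mono (hint n) (integrable_const C) (hfC n)))
    _ = limsup (fun n => ∫⁻ a, ENNReal.ofReal (f n a) ∂μ) atTop := by
        simp_rw [ofReal_integral_eq_lintegral_ofReal (hint _) (.of_forall (hf0 _))]
    _ ≤ ∫⁻ a, limsup (fun n => ENNReal.ofReal (f n a)) atTop ∂μ :=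
        limsup_lintegral_le (fun _ => ENNReal.ofReal C) (fun n => (hf n).ennreal_ofReal)
          (fun n => .of_forall fun a => ENNReal.ofReal_le_ofReal (hfC n a))
          (by simp [lintegral_const, ENNReal.mul_eq_top])
    _ = ENNReal.ofReal (∫ a, limsup (fun n => f n a) atTop ∂μ) := by
        simp_rw [ofReal_integral_eq_lintegral_ofReal hlim_int (.of_forall hlim0),
          ENNReal.ofReal_limsup (hcobdd _) (hbdd _)]

lemma limsup_integral_le_integral_limsup (hf : ∀ n, Measurable (f n))
    (hfC : ∀ n a, |f n a| ≤ C) :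
    limsup (fun n => ∫ a, f n a ∂μ) atTop ≤ ∫ a, limsup (fun n => f n a) atTop ∂μ := by
  have hint : ∀ n, Integrable (f n) μ := fun n =>
    .of_bound (hf n).aestronglyMeasurable C (.of_forall (hfC n))
  have hshift := limsup_integral_le_integral_limsup_of_nonneg (μ := μ) (C := C + C)
    (f := fun n a => f n a + C) (fun n => (hf n).add_const C)
    (fun n a => by linarith [neg_abs_le (f n a), hfC n a])
    (fun n a => by linarith [le_abs_self (f n a), hfC n a])
  have hbdd : ∀ a, IsBoundedUnder (· ≤ ·) atTop (fun n => f n a) := fun a =>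
    isBoundedUnder_of_eventually_le (.of_forall fun n => (abs_le.1 (hfC n a)).2)
  have hcobdd : ∀ a, IsCoboundedUnder (· ≤ ·) atTop (fun n => f n a) := fun a =>
    isCoboundedUnder_le_of_le atTop fun n => (abs_le.1 (hfC n a)).1
  have hint_bdd : IsBoundedUnder (· ≤ ·) atTop (fun n => ∫ a, f n a ∂μ) :=
    isBoundedUnder_of_eventually_le (a := C * μ.real univ) (.of_forall fun n => by
      simpa [mul_comm] using integral_mono (hint n) (integrable_const C)
        fun a => (abs_le.1 (hfC n a)).2)
  have hint_cobdd : IsCoboundedUnder (· ≤ ·) atTop (fun n => ∫ a, f n a ∂μ) :=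
    isCoboundedUnder_le_of_le (x := -C * μ.real univ) atTop fun n => by
      simpa [mul_comm] using integral_mono (integrable_const (-C)) (hint n)
        fun a => (abs_le.1 (hfC n a)).1
  have hlim_int : Integrable (fun a => limsup (fun n => f n a) atTop) μ :=
    .of_bound (Measurable.limsup hf).aestronglyMeasurable C (.of_forall fun a => abs_le.2
      ⟨le_limsup_of_le (hbdd a) fun b hb => (hb.exists).elim fun n hn =>
        (abs_le.1 (hfC n a)).1.trans hn,
        limsup_le_of_le (hcobdd a) (.of_forall fun n => (abs_le.1 (hfC n a)).2)⟩)
  simp_rw [integral_add (hint _) (integrable_const C),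
    limsup_add_const atTop _ _ (hbdd _) (hcobdd _)] at hshift
  rw [limsup_add_const atTop _ _ hint_bdd hint_cobdd, integral_add hlim_int (integrable_const C)]
    at hshift
  linarith

end ReverseFatou

lemma exists_boundedContinuous_integral_lt {Ω : Type*} [TopologicalSpace Ω] [MeasurableSpace Ω]
    [HasOuterApproxClosed Ω] [BorelSpace Ω] {μ ν : Measure Ω} [IsFiniteMeasure μ]
    [IsFiniteMeasure ν] (hne : μ ≠ ν) : ∃ F : Ω →ᵇ ℝ, ∫ x, F x ∂μ < ∫ x, F x ∂ν := by
  by_contra! h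
  refine hne (ext_of_forall_integral_eq_of_IsFiniteMeasure fun F => le_antisymm ?_ (h F))
  simpa [integral_neg] using h (-F)

section Birkhoff

variable {α : Type*} {f : α → α} {g : α → ℝ}

lemma abs_birkhoffAverage_le {C : ℝ} (hg : ∀ a, |g a| ≤ C) (n : ℕ) (x : α) :
    |birkhoffAverage ℝ f g n x| ≤ C := by
  rcases eq_or_ne n 0 with rfl | hn
  · simpa using (abs_nonneg _).trans (hg x)
  have hn' : (0 : ℝ) < n := by positivity
  rw [birkhoffAverage, smul_eq_mul, abs_mul, abs_inv, Nat.abs_cast, inv_mul_le_iff₀ hn',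
    birkhoffSum]
  exact (Finset.abs_sum_le_sum_abs _ _).trans
    ((Finset.sum_le_sum fun k _ => hg _).trans_eq (by simp))

lemma integral_birkhoffAverage [MeasurableSpace α] {μ : Measure α}
    (hf : MeasurePreserving f μ μ) (hg : Integrable g μ) {n : ℕ} (hn : n ≠ 0) :
    ∫ x, birkhoffAverage ℝ f g n x ∂μ = ∫ x, g x ∂μ := by
  have hcomp : ∀ k, ∫ x, g (f^[k] x) ∂μ = ∫ x, g x ∂μ := fun k => by
    rw [← integral_map (hf.iterate k).aemeasurable (by rw [(hf.iterate k).map_eq]; exact hg.1),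
      (hf.iterate k).map_eq]
  simp only [birkhoffAverage, birkhoffSum, smul_eq_mul]
  rw [integral_const_mul, integral_finsetSum _ fun k _ => by
    exact (hf.iterate k).integrable_comp_of_integrable hg]
  simp [hcomp, hn]

end Birkhoff

lemma ae_frequently_lt_birkhoffAverage_sub {α : Type*} [MeasurableSpace α] {T : α → α}
    {μ ν : Measure α} [IsProbabilityMeasure μ] [IsProbabilityMeasure ν]
    (hμ : Ergodic T μ) (hν : Ergodic T ν) {F : α → ℝ} (hF : Measurable F) {C : ℝ}
    (hFC : ∀ a, |F a| ≤ C) {c : ℝ} (hc : c < ∫ a, F a ∂ν - ∫ a, F a ∂μ) :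
    ∀ᵐ p ∂ν.prod μ,
      ∃ᶠ n in atTop, c < birkhoffAverage ℝ T F n p.1 - birkhoffAverage ℝ T F n p.2 := by
  set A := birkhoffAverage ℝ T F
  set V : ℕ → α × α → ℝ := fun n p => A n p.1 - A n p.2
  have hAm : ∀ n, Measurable (A n) := fun n =>
    (Finset.measurable_fun_sum _ fun k _ => hF.comp (hμ.measurable.iterate k)).const_smul
      ((n : ℝ)⁻¹)
  have hVm : ∀ n, Measurable (V n) := fun n =>
    ((hAm n).comp measurable_fst).sub ((hAm n).comp measurable_snd)
  have hVC : ∀ n p, |V n p| ≤ C + C := fun n p =>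
    (abs_sub _ _).trans (add_le_add (abs_birkhoffAverage_le hFC _ _)
      (abs_birkhoffAverage_le hFC _ _))
  have hbdd : ∀ p, IsBoundedUnder (· ≤ ·) atTop (fun n => V n p) := fun p =>
    isBoundedUnder_of_eventually_le (.of_forall fun n => (abs_le.1 (hVC n p)).2)
  have hbdd' : ∀ p, IsBoundedUnder (· ≥ ·) atTop (fun n => V n p) := fun p =>
    isBoundedUnder_of_eventually_ge (.of_forall fun n => (abs_le.1 (hVC n p)).1)
  have hA_shift : ∀ x, Tendsto (fun n => A n (T x) - A n x) atTop (𝓝 0) :=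
    tendsto_birkhoffAverage_apply_sub_birkhoffAverage' ℝ
      (isBounded_iff_forall_norm_le.2 ⟨C, forall_mem_range.2 hFC⟩) T
  obtain ⟨κ, hκ⟩ := hν.ae_eq_const_of_separately_invariant hμ (Measurable.limsup hVm)
    (fun y x => by
      rw [← limsup_add_eq_of_tendsto_zero (hbdd (y, x)) (hbdd' (y, x)) (hA_shift y)]
      congr with n
      simp only [V, Pi.add_apply]
      ring)
    (fun y x => by
      rw [← limsup_add_eq_of_tendsto_zero (hbdd (y, x)) (hbdd' (y, x))
        (by simpa using (hA_shift x).neg)]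
      congr with n
      simp only [V, Pi.add_apply]
      ring)
  have hVint : ∀ n ≠ 0, ∫ p, V n p ∂ν.prod μ = ∫ a, F a ∂ν - ∫ a, F a ∂μ := fun n hn => by
    have hFint : ∀ m : Measure α, [IsFiniteMeasure m] → Integrable F m := fun m _ =>
      .of_bound hF.aestronglyMeasurable C (.of_forall hFC)
    have hAint : ∀ m : Measure α, [IsFiniteMeasure m] → Integrable (A n) m := fun m _ =>
      .of_bound (hAm n).aestronglyMeasurable C (.of_forall (abs_birkhoffAverage_le hFC n))
    rw [integral_sub ((hAint ν).comp_fst μ) ((hAint μ).comp_snd ν), integral_fun_fst,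
      integral_fun_snd, integral_birkhoffAverage hν.toMeasurePreserving (hFint ν) hn,
      integral_birkhoffAverage hμ.toMeasurePreserving (hFint μ) hn]
    simp
  have hκ_ge : ∫ a, F a ∂ν - ∫ a, F a ∂μ ≤ κ :=
    calc ∫ a, F a ∂ν - ∫ a, F a ∂μ = limsup (fun n => ∫ p, V n p ∂ν.prod μ) atTop :=
          ((limsup_congr ((eventually_ne_atTop 0).mono hVint)).trans (limsup_const _)).symm
      _ ≤ ∫ p, limsup (fun n => V n p) atTop ∂ν.prod μ :=
          limsup_integral_le_integral_limsup hVm hVC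
      _ = κ := by simp [integral_congr_ae hκ]
  filter_upwards [hκ] with p hp
  exact frequently_lt_of_lt_limsup (hbdd' p).isCoboundedUnder_le
    (hc.trans_le (hκ_ge.trans_eq hp.symm))

namespace FKPaper

variable {X : Type*} [MetricSpace X]

lemma card_le_of_strictMono_lt {k n : ℕ} {i : Fin k → ℕ} (hi : StrictMono i)
    (hin : ∀ s, i s < n) : k ≤ n := by
  simpa using Fintype.card_le_of_injective (fun s => (⟨i s, hin s⟩ : Fin n))
    fun a b h => hi.injective (Fin.mk.inj_iff.1 h)

lemma maxFit_set_nonempty (T : X → X) (δ : ℝ) (n : ℕ) (x z : X) :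
    {k : ℕ | ∃ i j : Fin k → ℕ, StrictMono i ∧ StrictMono j ∧
      (∀ s, i s < n) ∧ (∀ s, j s < n) ∧ ∀ s, dist (T^[i s] x) (T^[j s] z) < δ}.Nonempty := by
  refine ⟨0, ?_⟩
  simp only [mem_ofPred_eq]
  exact ⟨Fin.elim0, Fin.elim0, fun a => a.elim0, fun a => a.elim0, fun a => a.elim0,
    fun a => a.elim0, fun a => a.elim0⟩

lemma maxFit_le (T : X → X) (δ : ℝ) (n : ℕ) (x z : X) : maxFit T δ n x z ≤ n :=
  csSup_le (maxFit_set_nonempty T δ n x z) fun _ ⟨_, _, hi, _, hin, _⟩ =>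
    card_le_of_strictMono_lt hi hin

lemma exists_match_maxFit (T : X → X) (δ : ℝ) (n : ℕ) (x z : X) :
    ∃ i j : Fin (maxFit T δ n x z) → ℕ, StrictMono i ∧ StrictMono j ∧
      (∀ s, i s < n) ∧ (∀ s, j s < n) ∧ ∀ s, dist (T^[i s] x) (T^[j s] z) < δ :=
  Nat.sSup_mem (maxFit_set_nonempty T δ n x z)
    ⟨n, fun _ ⟨_, _, hi, _, hin, _⟩ => card_le_of_strictMono_lt hi hin⟩

lemma fbarN_mem_Icc (T : X → X) (δ : ℝ) (n : ℕ) (x z : X) : fbarN T δ n x z ∈ Icc 0 1 := by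
  have hle : (maxFit T δ n x z : ℝ) ≤ n := by exact_mod_cast maxFit_le T δ n x z
  rw [fbarN, mem_Icc, sub_nonneg, sub_le_self_iff]
  exact ⟨div_le_one_of_le₀ hle n.cast_nonneg, by positivity⟩

lemma fbar_le_one (T : X → X) (δ : ℝ) (x z : X) : fbar T δ x z ≤ 1 :=
  limsup_le_of_le (isCoboundedUnder_le_of_le atTop fun n => (fbarN_mem_Icc T δ n x z).1)
    (.of_forall fun n => (fbarN_mem_Icc T δ n x z).2)

lemma exists_eventually_fbarN_lt_of_rhoFK_lt {T : X → X} {x z : X} {ε : ℝ}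
    (h : rhoFK T x z < ε) : ∃ δ, 0 < δ ∧ δ < ε ∧ ∀ᶠ n in atTop, fbarN T δ n x z < δ := by
  obtain ⟨δ, ⟨hδ, hfbar⟩, hδε⟩ :=
    exists_lt_of_csInf_lt (by exact ⟨2, two_pos, (fbar_le_one T 2 x z).trans_lt one_lt_two⟩) h
  exact ⟨δ, hδ, hδε, eventually_lt_of_limsup_lt hfbar
    (isBoundedUnder_of_eventually_le (a := 1) (.of_forall fun n => (fbarN_mem_Icc T δ n x z).2))⟩

lemma abs_sum_range_sub_sum_le {g : ℕ → ℝ} {M : ℝ} (hg : ∀ m, |g m| ≤ M) {k n : ℕ}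
    {i : Fin k → ℕ} (hi : StrictMono i) (hin : ∀ s, i s < n) :
    |∑ m ∈ Finset.range n, g m - ∑ s, g (i s)| ≤ (n - k) * M := by
  classical
  set A := Finset.univ.image i
  have hA : A ⊆ Finset.range n := by
    simpa [A, Finset.image_subset_iff] using hin
  have hcard : ((Finset.range n \ A).card : ℝ) = n - k := by
    rw [Finset.card_sdiff_of_subset hA, Nat.cast_sub (Finset.card_le_card hA),
      Finset.card_range, Finset.card_image_of_injective _ hi.injective, Finset.card_fin]
  rw [← Finset.sum_image fun a _ b _ h => hi.injective h, ← Finset.sum_sdiff hA,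
    add_sub_cancel_right, ← hcard]
  exact (Finset.abs_sum_le_sum_abs _ _).trans
    ((Finset.sum_le_sum fun m _ => hg m).trans_eq (by simp))

/-- Matched terms differ by at most `ω`, unmatched ones by at most `2M`. -/
lemma abs_sum_range_sub_sum_range_le_of_match {g h : ℕ → ℝ} {M ω : ℝ}
    (hg : ∀ m, |g m| ≤ M) (hh : ∀ m, |h m| ≤ M) {k n : ℕ} {i j : Fin k → ℕ}
    (hi : StrictMono i) (hj : StrictMono j) (hin : ∀ s, i s < n) (hjn : ∀ s, j s < n)
    (hclose : ∀ s, |g (i s) - h (j s)| ≤ ω) :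
    |∑ m ∈ Finset.range n, g m - ∑ m ∈ Finset.range n, h m| ≤ k * ω + 2 * (n - k) * M := by
  have hmatched : |∑ s, g (i s) - ∑ s, h (j s)| ≤ k * ω := by
    rw [← Finset.sum_sub_distrib]
    exact (Finset.abs_sum_le_sum_abs _ _).trans
      ((Finset.sum_le_sum fun s _ => hclose s).trans_eq (by simp))
  have hgi := abs_sum_range_sub_sum_le hg hi hin
  have hhj := abs_sum_range_sub_sum_le hh hj hjn
  calc |∑ m ∈ Finset.range n, g m - ∑ m ∈ Finset.range n, h m|
      = |(∑ m ∈ Finset.range n, g m - ∑ s, g (i s)) + (∑ s, g (i s) - ∑ s, h (j s))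
          - (∑ m ∈ Finset.range n, h m - ∑ s, h (j s))| := by ring_nf
    _ ≤ |∑ m ∈ Finset.range n, g m - ∑ s, g (i s)| + |∑ s, g (i s) - ∑ s, h (j s)|
          + |∑ m ∈ Finset.range n, h m - ∑ s, h (j s)| :=
        (abs_sub _ _).trans (add_le_add_left (abs_add_le _ _) _)
    _ ≤ k * ω + 2 * (n - k) * M := by linarith

lemma abs_birkhoffAverage_sub_le_of_fbarN_lt {T : X → X} {F : X → ℝ} {M ω δ : ℝ}
    (hM : ∀ a, |F a| ≤ M) (hω : ∀ a b, dist a b < δ → |F a - F b| ≤ ω) (hω0 : 0 ≤ ω)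
    {n : ℕ} (hn : n ≠ 0) {x z : X} (hfit : fbarN T δ n x z < δ) :
    |birkhoffAverage ℝ T F n x - birkhoffAverage ℝ T F n z| ≤ ω + 2 * δ * M := by
  obtain ⟨i, j, hi, hj, hin, hjn, hdist⟩ := exists_match_maxFit T δ n x z
  have hM0 : 0 ≤ M := (abs_nonneg _).trans (hM x)
  have hn' : (0 : ℝ) < n := by positivity
  have hk : (maxFit T δ n x z : ℝ) ≤ n := by exact_mod_cast maxFit_le T δ n x z
  have hunmatched : (n : ℝ) - maxFit T δ n x z ≤ δ * n := by
    rw [fbarN, sub_lt_comm, lt_div_iff₀ hn'] at hfit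
    linarith
  have hsum := abs_sum_range_sub_sum_range_le_of_match (g := fun m => F (T^[m] x))
    (h := fun m => F (T^[m] z)) (fun m => hM _) (fun m => hM _) hi hj hin hjn
    fun s => hω _ _ (hdist s)
  rw [← Real.dist_eq, dist_birkhoffAverage_birkhoffAverage, Real.dist_eq, div_le_iff₀ hn']
  calc |birkhoffSum T F n x - birkhoffSum T F n z|
      ≤ maxFit T δ n x z * ω + 2 * (n - maxFit T δ n x z) * M := hsum
    _ ≤ n * ω + 2 * (δ * n) * M := by gcongr
    _ = (ω + 2 * δ * M) * n := by ring

lemma exists_pos_eventually_abs_birkhoffAverage_sub_lt_of_rhoFK_le (T : X → X) {F : X → ℝ}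
    (hF : UniformContinuous F) {M : ℝ} (hM : ∀ a, |F a| ≤ M) {η : ℝ} (hη : 0 < η) :
    ∃ ε > 0, ∀ x z, rhoFK T x z ≤ ε →
      ∀ᶠ n in atTop, |birkhoffAverage ℝ T F n x - birkhoffAverage ℝ T F n z| < η := by
  obtain ⟨δ₀, hδ₀, hFδ₀⟩ := Metric.uniformContinuous_iff.1 hF (η / 2) (half_pos hη)
  obtain ⟨δ₁, hδ₁, hδ₁M⟩ := exists_pos_mul_lt (half_pos hη) (2 * M)
  refine ⟨min δ₀ δ₁ / 2, by positivity, fun x z hxz => ?_⟩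
  obtain ⟨δ, hδ, hδlt, hfit⟩ := exists_eventually_fbarN_lt_of_rhoFK_lt
    (hxz.trans_lt (half_lt_self (lt_min hδ₀ hδ₁)))
  have hM0 : 0 ≤ M := (abs_nonneg _).trans (hM x)
  have hδM : 2 * δ * M ≤ 2 * M * δ₁ := by
    rw [mul_right_comm]; gcongr; exact hδlt.le.trans (min_le_right _ _)
  filter_upwards [hfit, eventually_ne_atTop 0] with n hn hn0
  have := abs_birkhoffAverage_sub_le_of_fbarN_lt hM
    (fun a b hab => (hFδ₀ (hab.trans_le (hδlt.le.trans (min_le_left _ _)))).le) (half_pos hη).le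
    hn0 hn
  linarith

end FKPaper

theorem fkSensitive_of_two_fully_supported_ergodic_general {X : Type*} [MetricSpace X] [CompactSpace X]
    (T : X → X) [MeasurableSpace X] [BorelSpace X]
    (μ ν : Measure X) [IsProbabilityMeasure μ] [IsProbabilityMeasure ν]
    (hμ : Ergodic T μ) (hν : Ergodic T ν)
    (hμsupp : ∀ U : Set X, IsOpen U → U.Nonempty → 0 < μ U)
    (hνsupp : ∀ U : Set X, IsOpen U → U.Nonempty → 0 < ν U)
    (hne : μ ≠ ν) :
    FKSensitive T := by
  obtain ⟨F, hlt⟩ := exists_boundedContinuous_integral_lt hne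
  have hFC : ∀ a, |F a| ≤ ‖F‖ := F.norm_coe_le_norm
  have hgap := sub_pos.2 hlt
  obtain ⟨ε, hε, hclose⟩ := exists_pos_eventually_abs_birkhoffAverage_sub_lt_of_rhoFK_le T
    (CompactSpace.uniformContinuous_of_continuous F.continuous) hFC (half_pos hgap)
  refine ⟨ε, hε, fun U hU hUne => ?_⟩
  have hUU : ν.prod μ (U ×ˢ U) ≠ 0 := by
    rw [Measure.prod_prod]
    exact mul_ne_zero (hνsupp U hU hUne).ne' (hμsupp U hU hUne).ne'
  obtain ⟨⟨y, x⟩, ⟨hy, hx⟩, hfreq⟩ := Measure.exists_mem_of_measure_ne_zero_of_ae hUU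
    (ae_restrict_of_ae (ae_frequently_lt_birkhoffAverage_sub hμ hν F.continuous.measurable hFC
      (half_lt_self hgap)))
  refine ⟨x, hx, y, hy, not_le.1 fun hxy => ?_⟩
  obtain ⟨n, hn_gap, hn_close⟩ := (hfreq.and_eventually (hclose x y hxy)).exists
  rw [abs_sub_comm] at hn_close
  linarith [le_abs_self (birkhoffAverage ℝ T F n y - birkhoffAverage ℝ T F n x)]

/-- two distinct fully supported ergodic invariant measures force
FK-sensitivity. -/
theorem fkSensitive_of_two_fully_supported_ergodic {X : Type*} [MetricSpace X] [CompactSpace X] [Nonempty X]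
    (T : X → X) (hT : Continuous T) [MeasurableSpace X] [BorelSpace X]
    (μ ν : Measure X) [IsProbabilityMeasure μ] [IsProbabilityMeasure ν]
    (hμ : Ergodic T μ) (hν : Ergodic T ν)
    (hμsupp : ∀ U : Set X, IsOpen U → U.Nonempty → 0 < μ U)
    (hνsupp : ∀ U : Set X, IsOpen U → U.Nonempty → 0 < ν U)
    (hne : μ ≠ ν) :
    FKSensitive T :=
  fkSensitive_of_two_fully_supported_ergodic_general T μ ν hμ hν hμsupp hνsupp hne
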